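/- arXiv:1702.01363 — 13 statements merged into one kernel-verified Lean document; each statement's English description precedes it below -/
import Mathlib

section
/- In a biquandle X, if x ▷ y = y ▷̄ x (i.e., x underline-star y equals y overline-star x), then x = y. -/
/-- A biquandle: a set with two binary operations `u` (underline-star, `▷`) and
`o` (overline-star, `▷̄`) satisfying axioms (B1), (B2), (B3). -/
structure Biquandle (X : Type*) where
  u : X → X → X
  o : X → X → X
  b1 : ∀ x, u x x = o x x
  b2u : ∀ a, Function.Bijective fun x => u x a
  b2o : ∀ a, Function.Bijective fun x => o x a
  b2S : Function.Bijective fun p : X × X => (o p.2 p.1, u p.1 p.2)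
  b3uu : ∀ x y z, u (u x y) (u z y) = u (u x z) (o y z)
  b3uo : ∀ x y z, o (u x y) (u z y) = u (o x z) (o y z)
  b3oo : ∀ x y z, o (o x y) (o z y) = o (o x z) (u y z)

/-- In a biquandle, `x ▷ y = y ▷̄ x` implies `x = y`. -/
theorem stmt0 {X : Type*} [Nonempty X] (B : Biquandle X) (x y : X)
    (h : B.u x y = B.o y x) : x = y := by
  set c := B.u x y with hc
  -- From b3uu with z := x : u (u x y) (u x y) = u (u x x) (o y x)
  have key : B.u c c = B.u (B.u x x) c := by
    have := B.b3uu x y x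
    rw [← h] at this
    exact this
  have hxx : c = B.u x x := (B.b2u c).injective key
  -- Now S (x, x) = S (x, y)
  have hS : (fun p : X × X => (B.o p.2 p.1, B.u p.1 p.2)) (x, x)
      = (fun p : X × X => (B.o p.2 p.1, B.u p.1 p.2)) (x, y) := by
    simp only [Prod.mk.injEq]
    constructor
    · rw [← B.b1 x, ← hxx, h]
    · rw [← hxx]
  have := B.b2S.injective hS
  exact (Prod.mk.injEq _ _ _ _ ▸ this).2.symm ▸ rfl
end

section
/- In a biquandle X, for any a ∈ X there exists a unique element α ∈ X such that α ▷ α = α ▷̄ α = a. -/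
/-- In a biquandle, for any `a` there is a unique `α` with `α ▷ α = α ▷̄ α = a`. -/
theorem stmt1 {X : Type*} [Nonempty X] (B : Biquandle X) (a : X) :
    ∃! α : X, B.u α α = a ∧ B.o α α = a := by
  -- Existence: pick (x, y) with S(x,y) = (a,a), i.e. o y x = a and u x y = a.
  obtain ⟨⟨x, y⟩, hxy⟩ := B.b2S.surjective (a, a)
  simp only [Prod.mk.injEq] at hxy
  obtain ⟨h1, h2⟩ := hxy
  -- b3uo at (x, y, x): o (u x y) (u x y) = u (o x x) (o y x), i.e. o a a = u (o x x) a
  have h3 := B.b3uo x y x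
  rw [h2, h1] at h3
  -- also o a a = u a a by b1, so u (o x x) a = u a a, hence o x x = a.
  have key : B.u (B.o x x) a = B.u a a := by rw [← h3, B.b1]
  have hx : B.o x x = a := (B.b2u a).injective key
  have hux : B.u x x = a := (B.b1 x).trans hx
  refine ⟨x, ⟨hux, hx⟩, ?_⟩
  rintro β ⟨hb1, hb2⟩
  -- uniqueness: S(β,β) = (a,a) = S(x,x), so β = x by injectivity of S
  have : ((B.o β β, B.u β β) : X × X) = (B.o x x, B.u x x) := by
    rw [hb1, hb2, hx, hux]
  have h4 : ((β, β) : X × X) = (x, x) := B.b2S.injective (show (fun p : X × X => (B.o p.2 p.1, B.u p.1 p.2)) (β, β) = (fun p : X × X => (B.o p.2 p.1, B.u p.1 p.2)) (x, x) from this)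
  exact congrArg Prod.fst h4
end

section
/- Let G be a group with identity e, and ▷̄ : G×G → G a binary operation such that for any a ∈ G the map x ↦ x ▷̄ a is a group homomorphism, and for all a,b,x: x ▷̄ (ab) = (x ▷̄ a) ▷̄ (b ▷̄ a) and x ▷̄ e = x. Define a ▷ b := (b⁻¹ab) ▷̄ b. Then (G, ▷, ▷̄) is a biquandle. -/
/-- A `▷̄`-conjugation biquandle on a group is a biquandle. -/
theorem stmt2 {G : Type*} [Group G] (ob : G → G → G)
    (hhom : ∀ a x y, ob (x * y) a = ob x a * ob y a)
    (hmul : ∀ a b x, ob x (a * b) = ob (ob x a) (ob b a))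
    (hone : ∀ x, ob x 1 = x) :
    ∃ B : Biquandle G, B.o = ob ∧ ∀ a b, B.u a b = ob (b⁻¹ * a * b) b := by
  -- basic lemmas
  have hob1 : ∀ a, ob 1 a = 1 := by
    intro a
    have h : ob 1 a = ob 1 a * ob 1 a := by
      conv_lhs => rw [show (1 : G) = 1 * 1 by simp, hhom]
    exact (left_eq_mul.mp h)
  have hinv : ∀ a x, ob x⁻¹ a = (ob x a)⁻¹ := by
    intro a x
    have h : ob x a * ob x⁻¹ a = 1 := by
      rw [← hhom]; simp [hob1]
    exact (inv_eq_of_mul_eq_one_right h).symm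
  -- `fun x => ob x (ob a⁻¹ a)` is a two-sided inverse of `fun x => ob x a`
  have key : ∀ a x, ob (ob x a) (ob a⁻¹ a) = x := by
    intro a x
    rw [← hmul]; simp [hone]
  have inj : ∀ a, Function.Injective fun x => ob x a := by
    intro a
    exact Function.LeftInverse.injective (g := fun x => ob x (ob a⁻¹ a)) (key a)
  have key2 : ∀ a x, ob (ob x (ob a⁻¹ a)) a = x := by
    intro a x
    apply inj (ob a⁻¹ a)
    exact key a (ob x (ob a⁻¹ a))
  have bij : ∀ a, Function.Bijective fun x => ob x a := by
    intro a
    exact Function.bijective_iff_has_inverse.mpr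
      ⟨fun x => ob x (ob a⁻¹ a), key a, key2 a⟩
  -- the diagonal map Δ(y) = ob y y and its inverse Δ'(w) = ob w w⁻¹
  have dd' : ∀ w, ob (ob w w⁻¹) (ob w w⁻¹) = w := by
    intro w
    have h := hmul w⁻¹ w w
    simpa [hone] using h.symm
  have d'd : ∀ y, ob (ob y y) (ob y y)⁻¹ = y := by
    intro y
    have h := hmul y y⁻¹ y
    rw [hinv] at h
    simpa [hone] using h.symm
  have injD : Function.Injective fun p : G => ob p p :=
    Function.LeftInverse.injective (g := fun t : G => ob t t⁻¹) d'd
  -- key identity : ob (Δ y) (u x y) = Δ (o y x)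
  have e : ∀ x y : G, ob (ob y y) (ob (y⁻¹ * x * y) y) = ob (ob y x) (ob y x) := by
    intro x y
    rw [← hmul y (y⁻¹ * x * y) y, ← hmul x y y]
    congr 1
    group
  -- conjugation through a homomorphism
  have hc2 : ∀ a p q : G, (ob p a)⁻¹ * ob q a * ob p a = ob (p⁻¹ * q * p) a := by
    intro a p q
    rw [hhom, hhom, hinv]
  refine ⟨⟨fun x y => ob (y⁻¹ * x * y) y, ob, ?_, ?_, ?_, ?_, ?_, ?_, ?_⟩, rfl,
    fun a b => rfl⟩
  · -- b1
    intro x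
    congr 1
    group
  · -- b2u
    intro a
    refine Function.bijective_iff_has_inverse.mpr
      ⟨fun v => a * ob v (ob a⁻¹ a) * a⁻¹, ?_, ?_⟩
    · intro x
      show a * ob (ob (a⁻¹ * x * a) a) (ob a⁻¹ a) * a⁻¹ = x
      rw [key]
      group
    · intro v
      show ob (a⁻¹ * (a * ob v (ob a⁻¹ a) * a⁻¹) * a) a = v
      have h : a⁻¹ * (a * ob v (ob a⁻¹ a) * a⁻¹) * a = ob v (ob a⁻¹ a) := by group
      rw [h, key2]
  · -- b2o
    exact bij
  · -- b2S
    constructor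
    · -- injective
      rintro ⟨x, y⟩ ⟨x', y'⟩ h
      simp only [Prod.mk.injEq] at h
      obtain ⟨hp, hq⟩ := h
      have hyy' : y = y' := by
        apply injD
        apply inj (ob (y'⁻¹ * x' * y') y')
        show ob (ob y y) (ob (y'⁻¹ * x' * y') y') = ob (ob y' y') (ob (y'⁻¹ * x' * y') y')
        rw [← hq, e x y, hp, ← e x' y', hq]
      subst hyy'
      have hx : y⁻¹ * x * y = y⁻¹ * x' * y := inj y hq
      have : x = x' := mul_left_cancel (mul_right_cancel hx)
      simp [this]
    · -- surjective
      rintro ⟨p, q⟩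
      set r := ob p p with hr
      set w := ob r (ob q⁻¹ q) with hw
      set y := ob w w⁻¹ with hy
      set m := ob q (ob y⁻¹ y) with hm
      refine ⟨(y * m * y⁻¹, y), ?_⟩
      have harg : y⁻¹ * (y * m * y⁻¹) * y = m := by group
      have hmy : ob m y = q := key2 y q
      have hyyw : ob y y = w := dd' w
      have hfirst : ob y (y * m * y⁻¹) = p := by
        apply injD
        show ob (ob y (y * m * y⁻¹)) (ob y (y * m * y⁻¹)) = ob p p
        rw [← e (y * m * y⁻¹) y, harg, hmy, hyyw, hw, hr, key2]
      show (ob y (y * m * y⁻¹), ob (y⁻¹ * (y * m * y⁻¹) * y) y) = (p, q)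
      rw [harg, hmy, hfirst]
  · -- b3uu
    intro x y z
    show ob ((ob (y⁻¹ * z * y) y)⁻¹ * ob (y⁻¹ * x * y) y * ob (y⁻¹ * z * y) y)
        (ob (y⁻¹ * z * y) y)
      = ob ((ob y z)⁻¹ * ob (z⁻¹ * x * z) z * ob y z) (ob y z)
    rw [hc2, hc2, ← hmul y (y⁻¹ * z * y), ← hmul z y]
    congr 1 <;> group
  · -- b3uo
    intro x y z
    show ob (ob (y⁻¹ * x * y) y) (ob (y⁻¹ * z * y) y)
      = ob ((ob y z)⁻¹ * ob x z * ob y z) (ob y z)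
    rw [hc2, ← hmul y (y⁻¹ * z * y), ← hmul z y]
    congr 1 <;> group
  · -- b3oo
    intro x y z
    show ob (ob x y) (ob z y) = ob (ob x z) (ob (z⁻¹ * y * z) z)
    rw [← hmul y z, ← hmul z (z⁻¹ * y * z)]
    congr 1
    group
end

section
/- Let X be a disjoint union of groups G_λ with binary operations ▷, ▷̄ satisfying: the three exchange identities (x▷y)▷(z▷y) = (x▷z)▷(y▷̄z), (x▷y)▷̄(z▷y) = (x▷̄z)▷(y▷̄z), (x▷̄y)▷̄(z▷̄y) = (x▷̄z)▷̄(y▷z); the maps ▷x, ▷̄x restrict to group homomorphisms G_a → G_{a▷x}, G_a → G_{a▷̄x}; and for a,b ∈ G_λ, x ∈ X: x ▷ (ab) = (x▷a) ▷ (b▷̄a), x ▷ e_λ = x, x ▷̄ (ab) = (x▷̄a) ▷̄ (b▷̄a), x ▷̄ e_λ = x, and (a⁻¹b) ▷̄ a = (ba⁻¹) ▷ a. Then (X, ▷, ▷̄) is a biquandle, i.e., X is a multiple conjugation biquandle in the sense of Definition 3.1 (in particular, x ▷ x = x ▷̄ x holds, all maps ▷a, ▷̄a : X → X are bijective, and S(x,y)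 = (y▷̄x, x▷y) is bijective). -/
/-- The axioms of Definition 3.2 imply those of Definition 3.1: a disjoint union
of groups with operations satisfying the exchange identities, homomorphism,
product, unit, and conjugation conditions is a biquandle. -/
theorem stmt9 {Λ : Type*} {G : Λ → Type*} [∀ l, Group (G l)]
    (u o : (Σ l, G l) → (Σ l, G l) → Σ l, G l)
    (b3uu : ∀ x y z, u (u x y) (u z y) = u (u x z) (o y z))
    (b3uo : ∀ x y z, o (u x y) (u z y) = u (o x z) (o y z))
    (b3oo : ∀ x y z, o (o x y) (o z y) = o (o x z) (u y z))
    (uHom : ∀ (l : Λ) (g h : G l) (x : Σ l, G l), ∃ (m : Λ) (g' h' : G m),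
      u ⟨l, g⟩ x = ⟨m, g'⟩ ∧ u ⟨l, h⟩ x = ⟨m, h'⟩ ∧ u ⟨l, g * h⟩ x = ⟨m, g' * h'⟩)
    (oHom : ∀ (l : Λ) (g h : G l) (x : Σ l, G l), ∃ (m : Λ) (g' h' : G m),
      o ⟨l, g⟩ x = ⟨m, g'⟩ ∧ o ⟨l, h⟩ x = ⟨m, h'⟩ ∧ o ⟨l, g * h⟩ x = ⟨m, g' * h'⟩)
    (mulU : ∀ (l : Λ) (g h : G l) (x : Σ l, G l),
      u x ⟨l, g * h⟩ = u (u x ⟨l, g⟩) (o ⟨l, h⟩ ⟨l, g⟩))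
    (oneU : ∀ (l : Λ) (x : Σ l, G l), u x ⟨l, 1⟩ = x)
    (mulO : ∀ (l : Λ) (g h : G l) (x : Σ l, G l),
      o x ⟨l, g * h⟩ = o (o x ⟨l, g⟩) (o ⟨l, h⟩ ⟨l, g⟩))
    (oneO : ∀ (l : Λ) (x : Σ l, G l), o x ⟨l, 1⟩ = x)
    (conj : ∀ (l : Λ) (g h : G l),
      o ⟨l, g⁻¹ * h⟩ ⟨l, g⟩ = u ⟨l, h * g⁻¹⟩ ⟨l, g⟩) :
    ∃ B : Biquandle (Σ l, G l), B.u = u ∧ B.o = o := by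
  classical
  -- `hat ⟨l,g⟩ = u ⟨l,g⁻¹⟩ ⟨l,g⟩` is a two-sided inverse element for right translation
  have conjhat : ∀ (l : Λ) (g : G l), o ⟨l, g⁻¹⟩ ⟨l, g⟩ = u ⟨l, g⁻¹⟩ ⟨l, g⟩ := by
    intro l g
    have h := conj l g 1
    rwa [mul_one, one_mul] at h
  have uA : ∀ (x a : Σ l, G l), u (u x a) (u ⟨a.1, a.2⁻¹⟩ a) = x := by
    intro x a
    obtain ⟨l, g⟩ := a
    show u (u x ⟨l, g⟩) (u ⟨l, g⁻¹⟩ ⟨l, g⟩) = x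
    rw [← conjhat l g, ← mulU l g g⁻¹ x, mul_inv_cancel]
    exact oneU l x
  have oA : ∀ (x a : Σ l, G l), o (o x a) (u ⟨a.1, a.2⁻¹⟩ a) = x := by
    intro x a
    obtain ⟨l, g⟩ := a
    show o (o x ⟨l, g⟩) (u ⟨l, g⁻¹⟩ ⟨l, g⟩) = x
    rw [← conjhat l g, ← mulO l g g⁻¹ x, mul_inv_cancel]
    exact oneO l x
  have uB : ∀ (x a : Σ l, G l), u (u x (u ⟨a.1, a.2⁻¹⟩ a)) a = x := by
    intro x a
    have k1 := uA (u x (u ⟨a.1, a.2⁻¹⟩ a)) a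
    have k2 := uA (u (u x (u ⟨a.1, a.2⁻¹⟩ a)) a) (u ⟨a.1, a.2⁻¹⟩ a)
    rw [k1] at k2
    exact k2.symm.trans (uA x (u ⟨a.1, a.2⁻¹⟩ a))
  have oB : ∀ (x a : Σ l, G l), o (o x (u ⟨a.1, a.2⁻¹⟩ a)) a = x := by
    intro x a
    have k1 := oA (o x (u ⟨a.1, a.2⁻¹⟩ a)) a
    have k2 := oA (o (o x (u ⟨a.1, a.2⁻¹⟩ a)) a) (u ⟨a.1, a.2⁻¹⟩ a)
    rw [k1] at k2
    exact k2.symm.trans (oA x (u ⟨a.1, a.2⁻¹⟩ a))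
  -- `e (d x) = x` where `d x = u x x`, `e y = u y ⟨y.1, y.2⁻¹⟩`
  have ed : ∀ x : Σ l, G l,
      u (u x x) ⟨(u x x).1, (u x x).2⁻¹⟩ = x := by
    intro x
    obtain ⟨l, g⟩ := x
    obtain ⟨m, g', h', h1, h2, h3⟩ := uHom l g g⁻¹ ⟨l, g⟩
    obtain ⟨m₂, p, q, k1, k2, k3⟩ := uHom l 1 1 ⟨l, g⟩
    have hpq : p = q := by
      have h := k1.symm.trans k2
      simpa using h
    subst hpq
    have hp1 : p = 1 := by
      rw [one_mul] at k3
      have h := k1.symm.trans k3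
      simp only [Sigma.mk.inj_iff, heq_eq_eq] at h
      exact left_eq_mul.mp h.2
    subst hp1
    rw [mul_inv_cancel] at h3
    have hone := h3.symm.trans k1
    obtain ⟨rfl, hgh⟩ := Sigma.mk.inj_iff.mp hone
    have hgh' : g' * h' = 1 := eq_of_heq hgh
    have hinv : g'⁻¹ = h' := inv_eq_of_mul_eq_one_right hgh'
    rw [h1]
    show u ⟨m, g'⟩ ⟨m, g'⁻¹⟩ = ⟨l, g⟩
    rw [hinv, ← h2, ← h1]
    exact uA ⟨l, g⟩ ⟨l, g⟩
  have dinj : ∀ x z : Σ l, G l, u x x = u z z → x = z := by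
    intro x z h
    have e1 := ed x
    rw [h] at e1
    exact e1.symm.trans (ed z)
  have de : ∀ y : Σ l, G l,
      u (u y ⟨y.1, y.2⁻¹⟩) (u y ⟨y.1, y.2⁻¹⟩) = y := by
    intro y
    have h := uA y ⟨y.1, y.2⁻¹⟩
    simpa only [inv_inv, Sigma.eta] using h
  -- key identity: d (u x y) = u (d x) (o y x)
  have keyE : ∀ x y : Σ l, G l, u (u x y) (u x y) = u (u x x) (o y x) := by
    intro x y
    exact b3uu x y x
  refine ⟨⟨u, o, ?_, ?_, ?_, ?_, b3uu, b3uo, b3oo⟩, rfl, rfl⟩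
  · -- b1
    intro x
    obtain ⟨l, g⟩ := x
    have h := conj l g (g * g)
    rw [inv_mul_cancel_left, mul_inv_cancel_right] at h
    exact h.symm
  · -- b2u
    intro a
    rw [Function.bijective_iff_has_inverse]
    exact ⟨fun x => u x (u ⟨a.1, a.2⁻¹⟩ a), fun x => uA x a, fun x => uB x a⟩
  · -- b2o
    intro a
    rw [Function.bijective_iff_has_inverse]
    exact ⟨fun x => o x (u ⟨a.1, a.2⁻¹⟩ a), fun x => oA x a, fun x => oB x a⟩
  · -- b2S
    have recover1 : ∀ x y : Σ l, G l,
        u (u (u x y) (u x y)) (u ⟨(o y x).1, (o y x).2⁻¹⟩ (o y x)) = u x x := by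
      intro x y
      rw [keyE x y]
      exact uA (u x x) (o y x)
    constructor
    · -- injective
      intro p q h
      rw [Prod.mk.injEq] at h
      obtain ⟨h1, h2⟩ := h
      have hx : p.1 = q.1 := by
        apply dinj
        have r1 := recover1 p.1 p.2
        rw [h1, h2] at r1
        exact r1.symm.trans (recover1 q.1 q.2)
      have hy : p.2 = q.2 := by
        have r1 := oA p.2 p.1
        rw [h1, hx] at r1
        exact r1.symm.trans (oA q.2 q.1)
      exact Prod.ext hx hy
    · -- surjective
      rintro ⟨w, z⟩
      set c : Σ l, G l := u (u z z) (u ⟨w.1, w.2⁻¹⟩ w) with hc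
      set x : Σ l, G l := u c ⟨c.1, c.2⁻¹⟩ with hx
      set y : Σ l, G l := o w (u ⟨x.1, x.2⁻¹⟩ x) with hy
      refine ⟨(x, y), ?_⟩
      have hyx : o y x = w := oB w x
      have hdx : u x x = c := de c
      have hz : u x y = z := by
        apply dinj
        rw [keyE x y, hyx, hdx, hc]
        exact uB (u z z) w
      show (o y x, u x y) = (w, z)
      rw [hyx, hz]
end

section
/- Under the hypotheses of Definition 3.2 of an MCB (the three exchange identities, homomorphism conditions, the distributivity over products, unit conditions x ▷ e_λ = x, x ▷̄ e_λ = x, and (a⁻¹b) ▷̄ a = (ba⁻¹) ▷ a), one has x ▷ x = x ▷̄ x for every x ∈ X. -/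
/-- The axioms of Definition 3.2 imply those of Definition 3.1: a disjoint union
of groups with operations satisfying the exchange identities, homomorphism,
product, unit, and conjugation conditions is a biquandle. -/
theorem stmt10 {Λ : Type*} {G : Λ → Type*} [∀ l, Group (G l)]
    (u o : (Σ l, G l) → (Σ l, G l) → Σ l, G l)
    (b3uu : ∀ x y z, u (u x y) (u z y) = u (u x z) (o y z))
    (b3uo : ∀ x y z, o (u x y) (u z y) = u (o x z) (o y z))
    (b3oo : ∀ x y z, o (o x y) (o z y) = o (o x z) (u y z))
    (uHom : ∀ (l : Λ) (g h : G l) (x : Σ l, G l), ∃ (m : Λ) (g' h' : G m),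
      u ⟨l, g⟩ x = ⟨m, g'⟩ ∧ u ⟨l, h⟩ x = ⟨m, h'⟩ ∧ u ⟨l, g * h⟩ x = ⟨m, g' * h'⟩)
    (oHom : ∀ (l : Λ) (g h : G l) (x : Σ l, G l), ∃ (m : Λ) (g' h' : G m),
      o ⟨l, g⟩ x = ⟨m, g'⟩ ∧ o ⟨l, h⟩ x = ⟨m, h'⟩ ∧ o ⟨l, g * h⟩ x = ⟨m, g' * h'⟩)
    (mulU : ∀ (l : Λ) (g h : G l) (x : Σ l, G l),
      u x ⟨l, g * h⟩ = u (u x ⟨l, g⟩) (o ⟨l, h⟩ ⟨l, g⟩))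
    (oneU : ∀ (l : Λ) (x : Σ l, G l), u x ⟨l, 1⟩ = x)
    (mulO : ∀ (l : Λ) (g h : G l) (x : Σ l, G l),
      o x ⟨l, g * h⟩ = o (o x ⟨l, g⟩) (o ⟨l, h⟩ ⟨l, g⟩))
    (oneO : ∀ (l : Λ) (x : Σ l, G l), o x ⟨l, 1⟩ = x)
    (conj : ∀ (l : Λ) (g h : G l),
      o ⟨l, g⁻¹ * h⟩ ⟨l, g⟩ = u ⟨l, h * g⁻¹⟩ ⟨l, g⟩) :
    ∀ x : Σ l, G l, u x x = o x x := by
  rintro ⟨l, g⟩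
  have h := conj l g (g * g)
  rw [inv_mul_cancel_left, mul_inv_cancel_right] at h
  exact h.symm
end

section
/- Let G be a group, φ : G → Z(G) a homomorphism to the center of G, and let X be a group with a right G-action (written x^g). Define x ▷^g y = (xy⁻¹)^g · y^{φ(g)} and x ▷̄^g y = x^{φ(g)}. Then X with these operation families is a G-family of biquandles. -/
/-- A `G`-family of biquandles: a set with families of operations `u g` (`▷^g`)
and `o g` (`▷̄^g`) indexed by a group `G`, satisfying the exchange identities,
composition rules, unit conditions, and `x ▷^g x = x ▷̄^g x`. -/
structure BiquandleGFamily (G X : Type*) [Group G] where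
  u : G → X → X → X
  o : G → X → X → X
  ex1 : ∀ (g h : G) (x y z : X),
    u h (u g x y) (o g z y) = u (h⁻¹ * g * h) (u h x z) (u h y z)
  ex2 : ∀ (g h : G) (x y z : X),
    u h (o g x y) (o g z y) = o (h⁻¹ * g * h) (u h x z) (u h y z)
  ex3 : ∀ (g h : G) (x y z : X),
    o h (o g x y) (o g z y) = o (h⁻¹ * g * h) (o h x z) (u h y z)
  compU : ∀ (g h : G) (x y : X), u (g * h) x y = u h (u g x y) (u g y y)
  oneU : ∀ x y : X, u 1 x y = x
  compO : ∀ (g h : G) (x y : X), o (g * h) x y = o h (o g x y) (o g y y)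
  oneO : ∀ x y : X, o 1 x y = x
  diag : ∀ (g : G) (x : X), u g x x = o g x x

/-- A `G`-family of generalized Alexander biquandles: for a homomorphism
`φ : G → Z(G)` and a right `G`-action `ρ` on a group `X` by automorphisms, the
operations `x ▷^g y = (x y⁻¹)^g · y^{φ g}` and `x ▷̄^g y = x^{φ g}` form a
`G`-family of biquandles. -/
theorem stmt11 {G X : Type*} [Group G] [Group X] (φ : G →* G)
    (hφ : ∀ g, φ g ∈ Subgroup.center G)
    (ρ : G → X ≃* X) (hρ1 : ∀ x, ρ 1 x = x)
    (hρ : ∀ (g h : G) (x : X), ρ (g * h) x = ρ h (ρ g x)) :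
    ∃ F : BiquandleGFamily G X,
      (∀ (g : G) (x y : X), F.u g x y = ρ g (x * y⁻¹) * ρ (φ g) y) ∧
      (∀ (g : G) (x y : X), F.o g x y = ρ (φ g) x) := by
  have hc : ∀ (g k : G), φ g * k = k * φ g := fun g k =>
    (Subgroup.mem_center_iff.mp (hφ g) k).symm
  have hconj : ∀ g h : G, φ (h⁻¹ * g * h) = φ g := by
    intro g h
    have := hc g (φ h⁻¹)
    simp only [map_mul, map_inv]
    rw [← hc g (φ h)⁻¹]
    group
  have L1 : ∀ (a b : G) (x : X), ρ b (ρ a x) = ρ (a * b) x := fun a b x => (hρ a b x).symm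
  refine ⟨⟨fun g x y => ρ g (x * y⁻¹) * ρ (φ g) y, fun g x y => ρ (φ g) x,
    ?_, ?_, ?_, ?_, ?_, ?_, ?_, ?_⟩, fun _ _ _ => rfl, fun _ _ _ => rfl⟩
  · intro g h x y z
    simp only [hconj, map_mul, map_inv, mul_inv_rev, L1, mul_assoc,
      inv_mul_cancel_left, mul_inv_cancel_left]
    rw [show h * ((φ h)⁻¹ * (φ g * φ h)) = φ g * h by rw [hc g (φ h), hc g h]; group]
  · intro g h x y z
    simp only [hconj, map_mul, map_inv, mul_inv_rev, L1, mul_assoc,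
      inv_mul_cancel_left, mul_inv_cancel_left]
    rw [show h * ((φ h)⁻¹ * (φ g * φ h)) = φ g * h by rw [hc g (φ h), hc g h]; group]
  · intro g h x y z
    simp only [hconj, map_mul, map_inv, mul_inv_rev, L1, mul_assoc,
      inv_mul_cancel_left, mul_inv_cancel_left]
  · intro g h x y
    simp only [hconj, map_mul, map_inv, mul_inv_rev, L1, mul_assoc,
      inv_mul_cancel_left, mul_inv_cancel_left]
  · intro x y
    simp [hρ1]
  · intro g h x y
    simp only [hconj, map_mul, map_inv, mul_inv_rev, L1, mul_assoc,
      inv_mul_cancel_left, mul_inv_cancel_left]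
  · intro x y
    simp [hρ1]
  · intro g x
    simp
end

section
/- Let (X, (▷^g)_{g∈G}, (▷̄^g)_{g∈G}) be a G-family of biquandles. Then X × G = ⨆_{x∈X} {x} × G is a multiple conjugation biquandle with operations (x,g) ▷ (y,h) = (x ▷^h y, h⁻¹gh) and (x,g) ▷̄ (y,h) = (x ▷̄^h y, g), where each {x} × G is the group with multiplication (x,g)(x,h) = (x, gh). -/
/-- A multiple conjugation biquandle (Definition 3.1): a biquandle on the
disjoint union `Σ l, G l` of groups such that `▷x` and `▷̄x` are group
homomorphisms between the component groups, together with the product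
conditions and `(a⁻¹b) ▷̄ a = (ba⁻¹) ▷ a`. -/
structure MCB (Λ : Type*) (G : Λ → Type*) [∀ l, Group (G l)]
    extends Biquandle (Σ l, G l) where
  uHom : ∀ (l : Λ) (g h : G l) (x : Σ l, G l),
    ∃ (m : Λ) (g' h' : G m), u ⟨l, g⟩ x = ⟨m, g'⟩ ∧ u ⟨l, h⟩ x = ⟨m, h'⟩ ∧
      u ⟨l, g * h⟩ x = ⟨m, g' * h'⟩
  oHom : ∀ (l : Λ) (g h : G l) (x : Σ l, G l),
    ∃ (m : Λ) (g' h' : G m), o ⟨l, g⟩ x = ⟨m, g'⟩ ∧ o ⟨l, h⟩ x = ⟨m, h'⟩ ∧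
      o ⟨l, g * h⟩ x = ⟨m, g' * h'⟩
  mulU : ∀ (l : Λ) (g h : G l) (x : Σ l, G l),
    u x ⟨l, g * h⟩ = u (u x ⟨l, g⟩) (o ⟨l, h⟩ ⟨l, g⟩)
  mulO : ∀ (l : Λ) (g h : G l) (x : Σ l, G l),
    o x ⟨l, g * h⟩ = o (o x ⟨l, g⟩) (o ⟨l, h⟩ ⟨l, g⟩)
  conj : ∀ (l : Λ) (g h : G l),
    o ⟨l, g⁻¹ * h⟩ ⟨l, g⟩ = u ⟨l, h * g⁻¹⟩ ⟨l, g⟩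

section Aux

variable {G X : Type*} [Group G] (F : BiquandleGFamily G X)

lemma gfam_uLeft (h : G) (x y : X) :
    F.u h⁻¹ (F.u h x y) (F.u h y y) = x := by
  have := F.compU h h⁻¹ x y
  rw [mul_inv_cancel, F.oneU] at this
  exact this.symm

lemma gfam_uRight (h : G) (a y : X) :
    F.u h (F.u h⁻¹ a (F.u h y y)) y = a := by
  have := F.compU h⁻¹ h a (F.u h y y)
  rw [inv_mul_cancel, F.oneU, gfam_uLeft F h y y] at this
  exact this.symm

lemma gfam_oLeft (h : G) (x y : X) :
    F.o h⁻¹ (F.o h x y) (F.o h y y) = x := by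
  have := F.compO h h⁻¹ x y
  rw [mul_inv_cancel, F.oneO] at this
  exact this.symm

lemma gfam_oRight (h : G) (a y : X) :
    F.o h (F.o h⁻¹ a (F.o h y y)) y = a := by
  have := F.compO h⁻¹ h a (F.o h y y)
  rw [inv_mul_cancel, F.oneO, gfam_oLeft F h y y] at this
  exact this.symm

/-- Key identity: `d_h(y ▷̄^g x) = (d_h y) ▷̄^{h⁻¹gh} (x ▷^h y)`. -/
lemma gfam_key (g h : G) (x y : X) :
    F.u h (F.o g y x) (F.o g y x)
      = F.o (h⁻¹ * g * h) (F.u h y y) (F.u h x y) :=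
  F.ex2 g h y x y

/-- The underline operation on `X × G`. -/
def gfam_uop (F : BiquandleGFamily G X) (p q : Σ _ : X, G) : Σ _ : X, G :=
  ⟨F.u q.2 p.1 q.1, q.2⁻¹ * p.2 * q.2⟩

/-- The overline operation on `X × G`. -/
def gfam_oop (F : BiquandleGFamily G X) (p q : Σ _ : X, G) : Σ _ : X, G :=
  ⟨F.o q.2 p.1 q.1, p.2⟩

end Aux

/-- The associated multiple conjugation biquandle of a `G`-family of
biquandles: `X × G = ⨆_{x ∈ X} {x} × G` with `(x,g) ▷ (y,h) = (x ▷^h y, h⁻¹gh)`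
and `(x,g) ▷̄ (y,h) = (x ▷̄^h y, g)` is an MCB, each fiber `{x} × G` being a
copy of the group `G`. -/
theorem stmt12 {G X : Type*} [Group G] [Nonempty X] (F : BiquandleGFamily G X) :
    ∃ M : MCB X (fun _ => G),
      (∀ (x y : X) (g h : G),
        M.u ⟨x, g⟩ ⟨y, h⟩ = ⟨F.u h x y, h⁻¹ * g * h⟩) ∧
      (∀ (x y : X) (g h : G), M.o ⟨x, g⟩ ⟨y, h⟩ = ⟨F.o h x y, g⟩) := by
  refine ⟨{ u := gfam_uop F, o := gfam_oop F,
            b1 := ?_, b2u := ?_, b2o := ?_, b2S := ?_,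
            b3uu := ?_, b3uo := ?_, b3oo := ?_,
            uHom := ?_, oHom := ?_, mulU := ?_, mulO := ?_, conj := ?_ },
          fun x y g h => rfl, fun x y g h => rfl⟩
  · -- b1
    rintro ⟨x, g⟩
    simp only [gfam_uop, gfam_oop, Sigma.mk.inj_iff, heq_eq_eq]
    exact ⟨F.diag g x, by group⟩
  · -- b2u
    rintro ⟨y, h⟩
    rw [Function.bijective_iff_has_inverse]
    refine ⟨fun p => ⟨F.u h⁻¹ p.1 (F.u h y y), h * p.2 * h⁻¹⟩, ?_, ?_⟩
    · rintro ⟨x, g⟩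
      simp only [gfam_uop, Sigma.mk.inj_iff, heq_eq_eq]
      exact ⟨gfam_uLeft F h x y, by group⟩
    · rintro ⟨a, g⟩
      simp only [gfam_uop, Sigma.mk.inj_iff, heq_eq_eq]
      exact ⟨gfam_uRight F h a y, by group⟩
  · -- b2o
    rintro ⟨y, h⟩
    rw [Function.bijective_iff_has_inverse]
    refine ⟨fun p => ⟨F.o h⁻¹ p.1 (F.o h y y), p.2⟩, ?_, ?_⟩
    · rintro ⟨x, g⟩
      simp only [gfam_oop, Sigma.mk.inj_iff, heq_eq_eq]
      exact ⟨gfam_oLeft F h x y, trivial⟩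
    · rintro ⟨a, g⟩
      simp only [gfam_oop, Sigma.mk.inj_iff, heq_eq_eq]
      exact ⟨gfam_oRight F h a y, trivial⟩
  · -- b2S
    rw [Function.bijective_iff_has_inverse]
    refine ⟨fun q =>
      (⟨F.u q.1.2⁻¹ q.2.1
          (F.o q.2.2⁻¹ (F.u q.1.2 q.1.1 q.1.1) (F.o q.2.2 q.2.1 q.2.1)),
        q.1.2 * q.2.2 * q.1.2⁻¹⟩,
       ⟨F.u q.1.2⁻¹
          (F.o q.2.2⁻¹ (F.u q.1.2 q.1.1 q.1.1) (F.o q.2.2 q.2.1 q.2.1))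
          (F.o q.2.2⁻¹ (F.u q.1.2 q.1.1 q.1.1) (F.o q.2.2 q.2.1 q.2.1)),
        q.1.2⟩), ?_, ?_⟩
    · rintro ⟨⟨x, g⟩, ⟨y, h⟩⟩
      dsimp only [gfam_uop, gfam_oop]
      have hY : F.o (h⁻¹ * g * h)⁻¹ (F.u h (F.o g y x) (F.o g y x))
          (F.o (h⁻¹ * g * h) (F.u h x y) (F.u h x y)) = F.u h y y := by
        rw [gfam_key F g h x y]
        exact gfam_oLeft F (h⁻¹ * g * h) (F.u h y y) (F.u h x y)
      rw [hY]
      simp only [Prod.mk.injEq, Sigma.mk.inj_iff, heq_eq_eq]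
      exact ⟨⟨gfam_uLeft F h x y, by group⟩, gfam_uLeft F h y y, trivial⟩
    · rintro ⟨⟨B, h⟩, ⟨A, k⟩⟩
      dsimp only [gfam_uop, gfam_oop]
      set Y := F.o k⁻¹ (F.u h B B) (F.o k A A) with hYdef
      set y := F.u h⁻¹ Y Y with hydef
      set x := F.u h⁻¹ A Y with hxdef
      have hYy : F.u h y y = Y := by
        have := gfam_uLeft F h⁻¹ Y Y
        rwa [inv_inv] at this
      have hux : F.u h x y = A := by
        rw [hxdef, ← hYy]
        exact gfam_uRight F h A y
      have hog : F.o (h * k * h⁻¹) y x = B := by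
        have hk : (h * k * h⁻¹) = h * k * h⁻¹ := rfl
        have key := gfam_key F (h * k * h⁻¹) h x y
        have hcg : h⁻¹ * (h * k * h⁻¹) * h = k := by group
        rw [hcg, hYy, hux] at key
        -- key : F.u h (F.o (h*k*h⁻¹) y x) (F.o (h*k*h⁻¹) y x) = F.o k Y A
        have hokYA : F.o k Y A = F.u h B B := by
          rw [hYdef]
          exact gfam_oRight F k (F.u h B B) A
        rw [hokYA] at key
        -- injectivity of z ↦ F.u h z z
        have hinj : ∀ z w : X, F.u h z z = F.u h w w → z = w := by
          intro z w hzw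
          have h1 := gfam_uLeft F h z z
          have h2 := gfam_uLeft F h w w
          rw [hzw] at h1
          exact h1.symm.trans h2
        exact hinj _ _ key
      simp only [Prod.mk.injEq, Sigma.mk.inj_iff, heq_eq_eq]
      exact ⟨⟨hog, trivial⟩, hux, by group⟩
  · -- b3uu
    rintro ⟨x, a⟩ ⟨y, b⟩ ⟨z, c⟩
    simp only [gfam_uop, gfam_oop, Sigma.mk.inj_iff, heq_eq_eq]
    exact ⟨(F.ex1 c b x z y).symm, by group⟩
  · -- b3uo
    rintro ⟨x, a⟩ ⟨y, b⟩ ⟨z, c⟩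
    simp only [gfam_uop, gfam_oop, Sigma.mk.inj_iff, heq_eq_eq]
    exact ⟨(F.ex2 c b x z y).symm, by group⟩
  · -- b3oo
    rintro ⟨x, a⟩ ⟨y, b⟩ ⟨z, c⟩
    simp only [gfam_uop, gfam_oop, Sigma.mk.inj_iff, heq_eq_eq]
    exact ⟨F.ex3 b c x y z, trivial⟩
  · -- uHom
    rintro l g h ⟨y, k⟩
    refine ⟨F.u k l y, k⁻¹ * g * k, k⁻¹ * h * k, rfl, rfl, ?_⟩
    simp only [gfam_uop, Sigma.mk.inj_iff, heq_eq_eq]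
    exact ⟨trivial, by group⟩
  · -- oHom
    rintro l g h ⟨y, k⟩
    exact ⟨F.o k l y, g, h, rfl, rfl, rfl⟩
  · -- mulU
    rintro l g h ⟨x, a⟩
    simp only [gfam_uop, gfam_oop, Sigma.mk.inj_iff, heq_eq_eq]
    refine ⟨?_, by group⟩
    rw [F.compU g h x l, F.diag g l]
  · -- mulO
    rintro l g h ⟨x, a⟩
    simp only [gfam_oop, Sigma.mk.inj_iff, heq_eq_eq]
    exact ⟨F.compO g h x l, trivial⟩
  · -- conj
    intro l g h
    simp only [gfam_uop, gfam_oop, Sigma.mk.inj_iff, heq_eq_eq]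
    exact ⟨(F.diag g l).symm, by group⟩
end

section
/- In a multiple conjugation biquandle X = ⨆_λ G_λ with a △ b := b⁻¹a ▷̄ b (defined for a, b in the same group), for any a, b in the same group G_λ one has (a ▷ b) △ (a △ b) = b ▷̄ a and (a ▷̄ b) △ (a △ b) = b ▷ a. -/
/-- The partial operation `a △ b := (b⁻¹ a) ▷̄ b`, defined for `a`, `b` in the
same component group of an MCB (the hypothesis `e : a.1 = b.1`). -/
def MCB.tri {Λ : Type*} {G : Λ → Type*} [∀ l, Group (G l)] (M : MCB Λ G)
    (a b : Σ l, G l) (e : a.1 = b.1) : Σ l, G l :=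
  M.o ⟨b.1, b.2⁻¹ * (e ▸ a.2)⟩ b

private lemma snd_eq' {Λ : Type*} {G : Λ → Type*} {m : Λ} {x y : G m}
    (h : (⟨m, x⟩ : Σ l, G l) = ⟨m, y⟩) : x = y := by
  simpa using h

/-- In an MCB, for `a, b` in the same group: `(a ▷ b) △ (a △ b) = b ▷̄ a` and
`(a ▷̄ b) △ (a △ b) = b ▷ a` (in particular `a ▷ b`, `a ▷̄ b` lie in the same
group as `a △ b`). -/
theorem stmt13 {Λ : Type*} {G : Λ → Type*} [∀ l, Group (G l)] (M : MCB Λ G)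
    (l : Λ) (g h : G l) :
    (∃ e : (M.u ⟨l, g⟩ ⟨l, h⟩).1 = (M.tri ⟨l, g⟩ ⟨l, h⟩ rfl).1,
      M.tri (M.u ⟨l, g⟩ ⟨l, h⟩) (M.tri ⟨l, g⟩ ⟨l, h⟩ rfl) e
        = M.o ⟨l, h⟩ ⟨l, g⟩) ∧
    (∃ e : (M.o ⟨l, g⟩ ⟨l, h⟩).1 = (M.tri ⟨l, g⟩ ⟨l, h⟩ rfl).1,
      M.tri (M.o ⟨l, g⟩ ⟨l, h⟩) (M.tri ⟨l, g⟩ ⟨l, h⟩ rfl) e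
        = M.u ⟨l, h⟩ ⟨l, g⟩) := by
  have hc : M.tri ⟨l, g⟩ ⟨l, h⟩ rfl = M.o ⟨l, h⁻¹ * g⟩ ⟨l, h⟩ := rfl
  have hconj := M.conj l h g
  constructor
  · obtain ⟨m, p, q, hu1, hu2, hu3⟩ := M.uHom l (g * h⁻¹) h ⟨l, h⟩
    rw [inv_mul_cancel_right] at hu3
    have hc' : M.tri ⟨l, g⟩ ⟨l, h⟩ rfl = ⟨m, p⟩ := by rw [hc, hconj, hu1]
    rw [hu3, hc']
    refine ⟨rfl, ?_⟩
    show M.o ⟨m, p⁻¹ * (p * q)⟩ ⟨m, p⟩ = _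
    rw [inv_mul_cancel_left]
    have hm := M.mulO l h (h⁻¹ * g) ⟨l, h⟩
    rw [mul_inv_cancel_left] at hm
    rw [hm, ← M.b1, hu2, hconj, hu1]
  · obtain ⟨m, p, r, ho1, ho2, ho3⟩ := M.oHom l (h⁻¹ * g) (g⁻¹ * (h * g)) ⟨l, h⟩
    have hprod : (h⁻¹ * g) * (g⁻¹ * (h * g)) = g := by group
    rw [hprod] at ho3
    have hc' : M.tri ⟨l, g⟩ ⟨l, h⟩ rfl = ⟨m, p⟩ := by rw [hc, ho1]
    rw [ho3, hc']
    refine ⟨rfl, ?_⟩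
    show M.o ⟨m, p⁻¹ * (p * r)⟩ ⟨m, p⟩ = _
    -- O(1) = 1
    obtain ⟨m5, z, z', e1, e1', e2⟩ := M.oHom l 1 1 ⟨l, h⟩
    rw [one_mul] at e2
    have hz' : z' = z := snd_eq' (e1'.symm.trans e1)
    have hz1 : z = 1 := by
      have h2 : z = z * z' := snd_eq' (e1.symm.trans e2)
      rw [hz'] at h2
      exact (left_eq_mul.mp h2)
    have hone : M.o ⟨l, 1⟩ ⟨l, h⟩ = ⟨m5, 1⟩ := by rw [e1, hz1]
    -- O(g⁻¹ * h) = p⁻¹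
    obtain ⟨m4, w, t, f1, f2, f3⟩ := M.oHom l (h⁻¹ * g) (g⁻¹ * h) ⟨l, h⟩
    have hwp := f1.symm.trans ho1
    injection hwp with em ehw
    subst em
    have hw : w = p := eq_of_heq ehw
    have hprod2 : (h⁻¹ * g) * (g⁻¹ * h) = 1 := by group
    rw [hprod2] at f3
    have hwt := f3.symm.trans hone
    injection hwt with em2 ehwt
    subst em2
    have hwt1 : w * t = 1 := eq_of_heq ehwt
    have htp : t = p⁻¹ := eq_inv_of_mul_eq_one_right (by rw [← hw]; exact hwt1)
    -- o b b
    obtain ⟨m3, s, t2, k1, k2, k3⟩ := M.oHom l g (g⁻¹ * h) ⟨l, h⟩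
    have hsk := k1.symm.trans ho3
    injection hsk with em3 ehs
    subst em3
    have hs : s = p * r := eq_of_heq ehs
    have ht2 : t2 = t := snd_eq' (k2.symm.trans f2)
    rw [mul_inv_cancel_left] at k3
    have hst : s * t2 = p * r * p⁻¹ := by rw [hs, ht2, htp]
    rw [hst] at k3
    have hbb : M.u ⟨l, h⟩ ⟨l, h⟩ = ⟨_, p * r * p⁻¹⟩ := by rw [M.b1]; exact k3
    have hmu := M.mulU l h (h⁻¹ * g) ⟨l, h⟩
    rw [mul_inv_cancel_left, hbb, ho1] at hmu
    have hcj := M.conj _ p (p * r)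
    rw [hcj]
    exact hmu.symm
end

section
/- In a multiple conjugation biquandle X = ⨆_λ G_λ with a △ b := b⁻¹a ▷̄ b, for any a, b in the same group G_λ and any x ∈ X: (a △ b) ▷ (x ▷̄ b) = (a ▷ x) △ (b ▷ x), (a △ b) ▷̄ (x ▷ b) = (a ▷̄ x) △ (b ▷̄ x), (x ▷ b) ▷ (a △ b) = x ▷ a, and (x ▷̄ b) ▷̄ (a △ b) = x ▷̄ a. -/
/-- In an MCB, for `a, b` in the same group and any `x`:
`(a △ b) ▷ (x ▷̄ b) = (a ▷ x) △ (b ▷ x)`, `(a △ b) ▷̄ (x ▷ b) = (a ▷̄ x) △ (b ▷̄ x)`,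
`(x ▷ b) ▷ (a △ b) = x ▷ a`, and `(x ▷̄ b) ▷̄ (a △ b) = x ▷̄ a`. -/
theorem stmt14 {Λ : Type*} {G : Λ → Type*} [∀ l, Group (G l)] (M : MCB Λ G)
    (l : Λ) (g h : G l) (x : Σ l, G l) :
    (∃ e : (M.u ⟨l, g⟩ x).1 = (M.u ⟨l, h⟩ x).1,
      M.u (M.tri ⟨l, g⟩ ⟨l, h⟩ rfl) (M.o x ⟨l, h⟩)
        = M.tri (M.u ⟨l, g⟩ x) (M.u ⟨l, h⟩ x) e) ∧
    (∃ e : (M.o ⟨l, g⟩ x).1 = (M.o ⟨l, h⟩ x).1,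
      M.o (M.tri ⟨l, g⟩ ⟨l, h⟩ rfl) (M.u x ⟨l, h⟩)
        = M.tri (M.o ⟨l, g⟩ x) (M.o ⟨l, h⟩ x) e) ∧
    M.u (M.u x ⟨l, h⟩) (M.tri ⟨l, g⟩ ⟨l, h⟩ rfl) = M.u x ⟨l, g⟩ ∧
    M.o (M.o x ⟨l, h⟩) (M.tri ⟨l, g⟩ ⟨l, h⟩ rfl) = M.o x ⟨l, g⟩ := by
  have htri : M.tri ⟨l, g⟩ ⟨l, h⟩ rfl = M.o ⟨l, h⁻¹ * g⟩ ⟨l, h⟩ := rfl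
  refine ⟨?_, ?_, ?_, ?_⟩
  · obtain ⟨m, h', k', hh, hk, hg⟩ := M.uHom l h (h⁻¹ * g) x
    rw [mul_inv_cancel_left] at hg
    rw [hg, hh]
    refine ⟨rfl, ?_⟩
    have : M.tri ⟨m, h' * k'⟩ ⟨m, h'⟩ rfl = M.o ⟨m, h'⁻¹ * (h' * k')⟩ ⟨m, h'⟩ := rfl
    rw [this, inv_mul_cancel_left, ← hk, ← hh, htri, M.b3uo]
  · obtain ⟨m, h', k', hh, hk, hg⟩ := M.oHom l h (h⁻¹ * g) x
    rw [mul_inv_cancel_left] at hg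
    rw [hg, hh]
    refine ⟨rfl, ?_⟩
    have : M.tri ⟨m, h' * k'⟩ ⟨m, h'⟩ rfl = M.o ⟨m, h'⁻¹ * (h' * k')⟩ ⟨m, h'⟩ := rfl
    rw [this, inv_mul_cancel_left, ← hk, ← hh, htri, M.b3oo]
  · rw [htri, ← M.mulU, mul_inv_cancel_left]
  · rw [htri, ← M.mulO, mul_inv_cancel_left]
end

section
/- In a multiple conjugation biquandle X = ⨆_λ G_λ with a △ b := b⁻¹a ▷̄ b, for any a, b, c in the same group G_λ: (a △ c) △ (b △ c) = a △ b. -/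
/-- In an MCB, for `a, b, c` in the same group: `(a △ c) △ (b △ c) = a △ b`. -/
theorem stmt15 {Λ : Type*} {G : Λ → Type*} [∀ l, Group (G l)] (M : MCB Λ G)
    (l : Λ) (g h k : G l) :
    ∃ e : (M.tri ⟨l, g⟩ ⟨l, k⟩ rfl).1 = (M.tri ⟨l, h⟩ ⟨l, k⟩ rfl).1,
      M.tri (M.tri ⟨l, g⟩ ⟨l, k⟩ rfl) (M.tri ⟨l, h⟩ ⟨l, k⟩ rfl) e
        = M.tri ⟨l, g⟩ ⟨l, h⟩ rfl := by
  obtain ⟨m, g', h', hB, hX, hA⟩ := M.oHom l (k⁻¹ * h) (h⁻¹ * g) ⟨l, k⟩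
  have hA' : M.tri ⟨l, g⟩ ⟨l, k⟩ rfl = ⟨m, g' * h'⟩ := by
    show M.o ⟨l, k⁻¹ * g⟩ ⟨l, k⟩ = _
    rw [show k⁻¹ * g = (k⁻¹ * h) * (h⁻¹ * g) by group]
    exact hA
  have hB' : M.tri ⟨l, h⟩ ⟨l, k⟩ rfl = ⟨m, g'⟩ := hB
  rw [hA', hB']
  refine ⟨rfl, ?_⟩
  show M.o ⟨m, g'⁻¹ * (g' * h')⟩ ⟨m, g'⟩ = M.o ⟨l, h⁻¹ * g⟩ ⟨l, h⟩
  rw [inv_mul_cancel_left]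
  rw [show (⟨l, h⟩ : Σ l, G l) = ⟨l, k * (k⁻¹ * h)⟩ by rw [mul_inv_cancel_left]]
  rw [M.mulO, hB, hX]
end

section
/- Let X be a biquandle and φ : X × X → X × X the map φ(x,y) = (x ▷ y, y ▷ y). Then φ is a bijection, and writing φⁿ(x,y) = (fₙ(x,y), gₙ(x,y)) for n ∈ ℤ, one has gₙ(x,y) = fₙ(y,y) for all x, y ∈ X and all n ∈ ℤ. -/
open Function Equiv

theorem Function.Semiconj.perm_pow {α β : Type*} {h : α → β} {f : Perm α} {g : Perm β}
    (H : Semiconj h f g) (n : ℕ) : Semiconj h ⇑(f ^ n) ⇑(g ^ n) := by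
  simpa only [Perm.coe_pow] using H.iterate_right n

theorem Function.Semiconj.perm_zpow {α β : Type*} {h : α → β} {f : Perm α} {g : Perm β}
    (H : Semiconj h f g) : ∀ n : ℤ, Semiconj h ⇑(f ^ n) ⇑(g ^ n)
  | (n : ℕ) => H.perm_pow n
  | .negSucc n => by
    rw [zpow_negSucc, zpow_negSucc, Perm.inv_def, Perm.inv_def]
    exact (H.perm_pow (n + 1)).inverses_right (f ^ (n + 1)).apply_symm_apply
      (g ^ (n + 1)).symm_apply_apply

namespace Biquandle

variable {X : Type*} (B : Biquandle X)

theorem kink_bijective : Bijective fun x => B.u x x := by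
  constructor
  · intro x y (h : B.u x x = B.u y y)
    have hS : (B.o x x, B.u x x) = (B.o y y, B.u y y) := by rw [← B.b1, ← B.b1, h]
    exact congrArg Prod.fst (B.b2S.injective (a₁ := (x, x)) (a₂ := (y, y)) hS)
  · intro a
    obtain ⟨⟨x, y⟩, hS⟩ := B.b2S.surjective (a, a)
    obtain ⟨hyx, hxy⟩ := Prod.mk.inj hS
    -- (B3) for `(y, x, y)` reads `a ▷̄ a = (y ▷̄ y) ▷̄ a`
    have h := B.b3oo y x y
    rw [hyx, hxy] at h
    exact ⟨y, (B.b1 y).trans ((B.b2o a).injective h).symm⟩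

noncomputable def kinkEquiv : Perm X := Equiv.ofBijective _ B.kink_bijective

noncomputable def rightEquiv (a : X) : Perm X := Equiv.ofBijective _ (B.b2u a)

noncomputable def phi : Perm (X × X) :=
  (prodComm X X).trans ((prodShear B.kinkEquiv B.rightEquiv).trans (prodComm X X))

theorem phi_apply (p : X × X) : B.phi p = (B.u p.1 p.2, B.u p.2 p.2) := rfl

theorem semiconj_snd_phi : Semiconj Prod.snd B.phi B.kinkEquiv := fun _ => rfl

theorem semiconj_diag_kinkEquiv : Semiconj (fun y : X => (y, y)) B.kinkEquiv B.phi := fun _ => rfl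

end Biquandle

theorem stmt16_general {X : Type*} (B : Biquandle X) :
    ∃ φ : Equiv.Perm (X × X),
      (∀ p : X × X, φ p = (B.u p.1 p.2, B.u p.2 p.2)) ∧
      ∀ (n : ℤ) (x y : X), ((φ ^ n) (x, y)).2 = ((φ ^ n) (y, y)).1 := by
  refine ⟨B.phi, B.phi_apply, fun n x y => ?_⟩
  rw [B.semiconj_snd_phi.perm_zpow n (x, y), ← B.semiconj_diag_kinkEquiv.perm_zpow n y]

/-- For a biquandle `X`, the map `φ(x,y) = (x ▷ y, y ▷ y)` is a bijection of
`X × X`, and writing `φⁿ(x,y) = (fₙ(x,y), gₙ(x,y))` for `n : ℤ`, one has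
`gₙ(x,y) = fₙ(y,y)`. -/
theorem stmt16 {X : Type*} [Nonempty X] (B : Biquandle X) :
    ∃ φ : Equiv.Perm (X × X),
      (∀ p : X × X, φ p = (B.u p.1 p.2, B.u p.2 p.2)) ∧
      ∀ (n : ℤ) (x y : X), ((φ ^ n) (x, y)).2 = ((φ ^ n) (y, y)).1 :=
  stmt16_general B
end

section
/- In a biquandle X, for every integer n: if a ▷^{[n]} b = c then a = c ▷^{[−n]} (b ▷^{[n]} b), and if a ▷̄^{[n]} b = c then a = c ▷̄^{[−n]} (b ▷̄^{[n]} b). In particular, if a ▷^{[n]} a = c then a = c ▷^{[−n]} c. -/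
/-- For the `n`-parallel operations of a biquandle: if `a ▷^[n] b = c` then
`a = c ▷^[-n] (b ▷^[n] b)`; if `a ▷̄^[n] b = c` then `a = c ▷̄^[-n] (b ▷̄^[n] b)`;
in particular, if `a ▷^[n] a = c` then `a = c ▷^[-n] c`. -/
theorem stmt17 {X : Type*} [Nonempty X] (B : Biquandle X)
    (pu po : ℤ → X → X → X)
    (pu0 : ∀ a b, pu 0 a b = a)
    (pu1 : ∀ a b, pu 1 a b = B.u a b)
    (purec : ∀ (i j : ℤ) a b, pu (i + j) a b = pu j (pu i a b) (pu i b b))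
    (po0 : ∀ a b, po 0 a b = a)
    (po1 : ∀ a b, po 1 a b = B.o a b)
    (porec : ∀ (i j : ℤ) a b, po (i + j) a b = po j (po i a b) (po i b b)) :
    ∀ (n : ℤ) (a b c : X),
      (pu n a b = c → a = pu (-n) c (pu n b b)) ∧
      (po n a b = c → a = po (-n) c (po n b b)) ∧
      (pu n a a = c → a = pu (-n) c c) ∧
      (po n a a = c → a = po (-n) c c) := by
  refine fun n a b c => ⟨fun h => ?_, fun h => ?_, fun h => ?_, fun h => ?_⟩ <;>
    subst h <;> first
      | rw [← purec]; simp [pu0]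
      | rw [← porec]; simp [po0]
end

section
/- Let X be a biquandle. Then (X, (▷^{[n]})_{n∈ℤ}, (▷̄^{[n]})_{n∈ℤ}) is a ℤ-family of biquandles; in particular, for all integers m, n and all a, b, c ∈ X: (a ▷^{[m]} b) ▷^{[n]} (c ▷̄^{[m]} b) = (a ▷^{[n]} c) ▷^{[m]} (b ▷^{[n]} c), (a ▷̄^{[m]} b) ▷^{[n]} (c ▷̄^{[m]} b) = (a ▷^{[n]} c) ▷̄^{[m]} (b ▷^{[n]} c), and (a ▷̄^{[m]} b) ▷̄^{[n]} (c ▷̄^{[m]} b) = (a ▷̄^{[n]} c) ▷̄^{[m]} (b ▷^{[n]} c). -/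
/-!
Write `pu`, `po` for the parallel operations. The pairs `(m, n)` for which the three exchange
identities hold form a set closed under addition in either argument (expand both sides with the
composition rule) and under negation in either argument (the operations `p (-n)` undo `p n`), and
`(1, 1)` is the biquandle axiom (B3); hence every pair qualifies. The diagonal identity
`pu n a a = po n a a` propagates in the same way from (B1), and it is needed along the way
because the composition rules mix diagonal values of the two families.
-/

theorem Int.induction_of_add_of_neg {P : ℤ → Prop} (one : P 1)
    (add : ∀ i j, P i → P j → P (i + j)) (neg : ∀ i, P i → P (-i)) (n : ℤ) : P n := by
  have zero : P 0 := by simpa using add 1 (-1) one (neg 1 one)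
  induction n using Int.induction_on with
  | zero => exact zero
  | succ i ih => exact add i 1 ih one
  | pred i ih => simpa [sub_eq_add_neg] using add _ _ ih (neg 1 one)

structure IsParallelFamily {X : Type*} (p : ℤ → X → X → X) : Prop where
  zero : ∀ a b, p 0 a b = a
  add : ∀ i j a b, p (i + j) a b = p j (p i a b) (p i b b)

structure ExchangeAt {X : Type*} (pu po : ℤ → X → X → X) (m n : ℤ) : Prop where
  uu : ∀ a b c, pu n (pu m a b) (po m c b) = pu m (pu n a c) (pu n b c)
  uo : ∀ a b c, pu n (po m a b) (po m c b) = po m (pu n a c) (pu n b c)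
  oo : ∀ a b c, po n (po m a b) (po m c b) = po m (po n a c) (pu n b c)

namespace IsParallelFamily

variable {X : Type*} {p q : ℤ → X → X → X}

theorem cancel (hp : IsParallelFamily p) (i : ℤ) (x y : X) :
    p (-i) (p i x y) (p i y y) = x := by
  rw [← hp.add, add_neg_cancel, hp.zero]

theorem cancel_neg (hp : IsParallelFamily p) (i : ℤ) (x y : X) :
    p i (p (-i) x y) (p (-i) y y) = x := by
  simpa using hp.cancel (-i) x y

theorem diag_eq (hp : IsParallelFamily p) (hq : IsParallelFamily q)
    (h1 : ∀ a, p 1 a a = q 1 a a) (n : ℤ) (a : X) : p n a a = q n a a := by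
  induction n using Int.induction_of_add_of_neg generalizing a with
  | one => exact h1 a
  | add i j hi hj => rw [hp.add, hq.add, hi, hj]
  | neg i hi =>
    -- `z ↦ p i z z` is injective with left inverse `z ↦ p (-i) z z`
    have key : p i (p (-i) a a) (p (-i) a a) = p i (q (-i) a a) (q (-i) a a) := by
      rw [hp.cancel_neg, hi, hq.cancel_neg]
    rw [← hp.cancel i (p (-i) a a) (p (-i) a a), key, hp.cancel]

end IsParallelFamily

namespace ExchangeAt

variable {X : Type*} {pu po : ℤ → X → X → X}

theorem add_right (hu : IsParallelFamily pu) (ho : IsParallelFamily po)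
    (hdiag : ∀ n a, pu n a a = po n a a) {m n₁ n₂ : ℤ}
    (e₁ : ExchangeAt pu po m n₁) (e₂ : ExchangeAt pu po m n₂) :
    ExchangeAt pu po m (n₁ + n₂) := by
  constructor <;> intro a b c
  · rw [hu.add, hu.add, hu.add, e₁.uu, e₁.uo, e₂.uu]
  · rw [hu.add, hu.add, hu.add, e₁.uo, e₁.uo, e₂.uo]
  · rw [ho.add, ho.add, hu.add, e₁.oo, e₁.oo, e₂.oo, hdiag]

theorem add_left (hu : IsParallelFamily pu) (ho : IsParallelFamily po)
    (hdiag : ∀ n a, pu n a a = po n a a) {m₁ m₂ n : ℤ}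
    (e₁ : ExchangeAt pu po m₁ n) (e₂ : ExchangeAt pu po m₂ n) :
    ExchangeAt pu po (m₁ + m₂) n := by
  constructor <;> intro a b c
  · rw [hu.add m₁ m₂ a b, ho.add, ← hdiag m₁ b, e₂.uu, e₁.uu, e₁.uu, hu.add]
  · rw [ho.add m₁ m₂ a b, ho.add, e₂.uo, e₁.uo, e₁.uo, ho.add]
  · rw [ho.add m₁ m₂ a b, ho.add, e₂.oo, e₁.oo, e₁.uo, ho.add]

theorem neg_right (hu : IsParallelFamily pu) (ho : IsParallelFamily po)
    (hdiag : ∀ n a, pu n a a = po n a a) {m n : ℤ} (e : ExchangeAt pu po m n) :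
    ExchangeAt pu po m (-n) := by
  constructor <;> intro a b c
  · have ha := e.uu (pu (-n) a c) (pu (-n) b c) (pu (-n) c c)
    have hc := e.uo (pu (-n) c c) (pu (-n) b c) (pu (-n) c c)
    rw [hu.cancel_neg, hu.cancel_neg] at ha hc
    rw [← ha, ← hc, hu.cancel]
  · have ha := e.uo (pu (-n) a c) (pu (-n) b c) (pu (-n) c c)
    have hc := e.uo (pu (-n) c c) (pu (-n) b c) (pu (-n) c c)
    rw [hu.cancel_neg, hu.cancel_neg] at ha hc
    rw [← ha, ← hc, hu.cancel]
  · have ha := e.oo (po (-n) a c) (pu (-n) b c) (po (-n) c c)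
    have hc := e.oo (po (-n) c c) (pu (-n) b c) (po (-n) c c)
    rw [← hdiag (-n) c, hu.cancel_neg, hdiag, ho.cancel_neg] at ha hc
    rw [← ha, ← hc, ho.cancel]

theorem neg_left (hu : IsParallelFamily pu) (ho : IsParallelFamily po)
    (hdiag : ∀ n a, pu n a a = po n a a) {m n : ℤ} (e : ExchangeAt pu po m n) :
    ExchangeAt pu po (-m) n := by
  constructor <;> intro a b c
  · have ha := e.uu (pu (-m) a b) (pu (-m) b b) (po (-m) c b)
    have hb := e.uu (pu (-m) b b) (pu (-m) b b) (po (-m) c b)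
    rw [hu.cancel_neg, hdiag (-m) b, ho.cancel_neg, ← hdiag (-m) b] at ha hb
    rw [ha, hb, hu.cancel]
  · have ha := e.uo (po (-m) a b) (po (-m) b b) (po (-m) c b)
    have hb := e.uo (po (-m) b b) (po (-m) b b) (po (-m) c b)
    rw [ho.cancel_neg, ho.cancel_neg] at ha hb
    rw [ha, hb, ho.cancel]
  · have ha := e.oo (po (-m) a b) (po (-m) b b) (po (-m) c b)
    have hb := e.uo (po (-m) b b) (po (-m) b b) (po (-m) c b)
    rw [ho.cancel_neg, ho.cancel_neg] at ha hb
    rw [ha, hb, ho.cancel]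

end ExchangeAt

theorem Biquandle.exchangeAt_one_one {X : Type*} (B : Biquandle X) {pu po : ℤ → X → X → X}
    (pu1 : ∀ a b, pu 1 a b = B.u a b) (po1 : ∀ a b, po 1 a b = B.o a b) :
    ExchangeAt pu po 1 1 where
  uu a b c := by simp only [pu1, po1]; exact (B.b3uu a c b).symm
  uo a b c := by simp only [pu1, po1]; exact (B.b3uo a c b).symm
  oo a b c := by simp only [pu1, po1]; exact B.b3oo a b c

theorem stmt19_general {X : Type*} (B : Biquandle X)
    (pu po : ℤ → X → X → X)
    (pu0 : ∀ a b, pu 0 a b = a)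
    (pu1 : ∀ a b, pu 1 a b = B.u a b)
    (purec : ∀ (i j : ℤ) a b, pu (i + j) a b = pu j (pu i a b) (pu i b b))
    (po0 : ∀ a b, po 0 a b = a)
    (po1 : ∀ a b, po 1 a b = B.o a b)
    (porec : ∀ (i j : ℤ) a b, po (i + j) a b = po j (po i a b) (po i b b)) :
    (∀ (m n : ℤ) (a b c : X),
      pu n (pu m a b) (po m c b) = pu m (pu n a c) (pu n b c)) ∧
    (∀ (m n : ℤ) (a b c : X),
      pu n (po m a b) (po m c b) = po m (pu n a c) (pu n b c)) ∧
    (∀ (m n : ℤ) (a b c : X),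
      po n (po m a b) (po m c b) = po m (po n a c) (pu n b c)) ∧
    (∀ (n : ℤ) (a : X), pu n a a = po n a a) := by
  have hu : IsParallelFamily pu := ⟨pu0, purec⟩
  have ho : IsParallelFamily po := ⟨po0, porec⟩
  have hdiag : ∀ n a, pu n a a = po n a a :=
    hu.diag_eq ho fun a => by rw [pu1, po1, B.b1]
  have hexch : ∀ m n, ExchangeAt pu po m n := by
    have h1 : ∀ n, ExchangeAt pu po 1 n :=
      Int.induction_of_add_of_neg (B.exchangeAt_one_one pu1 po1)
        (fun _ _ => ExchangeAt.add_right hu ho hdiag) (fun _ => ExchangeAt.neg_right hu ho hdiag)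
    exact fun m n => Int.induction_of_add_of_neg (P := (ExchangeAt pu po · n)) (h1 n)
      (fun _ _ => ExchangeAt.add_left hu ho hdiag) (fun _ => ExchangeAt.neg_left hu ho hdiag) m
  exact ⟨fun m n => (hexch m n).uu, fun m n => (hexch m n).uo, fun m n => (hexch m n).oo, hdiag⟩

/-- A biquandle with its `n`-parallel operations is a `ℤ`-family of biquandles:
the three exchange identities hold for all `m, n : ℤ` (for `G = ℤ` abelian the
conjugate `h⁻¹gh` is just `g`), together with `a ▷^[n] a = a ▷̄^[n] a`; the
composition rules and unit conditions are the defining equations. -/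
theorem stmt19 {X : Type*} [Nonempty X] (B : Biquandle X)
    (pu po : ℤ → X → X → X)
    (pu0 : ∀ a b, pu 0 a b = a)
    (pu1 : ∀ a b, pu 1 a b = B.u a b)
    (purec : ∀ (i j : ℤ) a b, pu (i + j) a b = pu j (pu i a b) (pu i b b))
    (po0 : ∀ a b, po 0 a b = a)
    (po1 : ∀ a b, po 1 a b = B.o a b)
    (porec : ∀ (i j : ℤ) a b, po (i + j) a b = po j (po i a b) (po i b b)) :
    (∀ (m n : ℤ) (a b c : X),
      pu n (pu m a b) (po m c b) = pu m (pu n a c) (pu n b c)) ∧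
    (∀ (m n : ℤ) (a b c : X),
      pu n (po m a b) (po m c b) = po m (pu n a c) (pu n b c)) ∧
    (∀ (m n : ℤ) (a b c : X),
      po n (po m a b) (po m c b) = po m (po n a c) (pu n b c)) ∧
    (∀ (n : ℤ) (a : X), pu n a a = po n a a) :=
  stmt19_general B pu po pu0 pu1 purec po0 po1 porec
end
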